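/- arXiv:1703.08954 — 2 statements merged into one kernel-verified Lean document; each statement's English description precedes it below -/
import Mathlib

section
/- Define w(n,i) := 4(n+1)(n−i)(n−i−1)(i−1)/(n(n−1)²·i²(i+1)²(i+2)(i+3)) and c(n,k1,k2) := −8(n+1)(3n−k2+2)(n−k2−1)/(n(n−1)²(k1+1)(k1+2)(k2+1)(k2+2)(k2+3)(k2+4)). Then for all integers n ≥ 4 and 1 ≤ i1 < i2 ≤ n−1: (1/(i1·i2))·[ i2²·w(n,i2) + ∑_{k1=i1}^{i2−1} ∑_{k2=i2}^{n−1} c(n,k1,k2) ] = 4(n+1)(i1−1)(n−i2)(n−i2−1)/(n(n−1)²·i1(i1+1)·i2(i2+1)(i2+2)(i2+3)). -/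
/-- `w(n,i) = Var(V_i^{(n)})`. -/
noncomputable def wVar (n i : ℝ) : ℝ :=
  4 * (n + 1) * (n - i) * (n - i - 1) * (i - 1) /
    (n * (n - 1) ^ 2 * i ^ 2 * (i + 1) ^ 2 * (i + 2) * (i + 3))

/-- `c(n,k1,k2) = Cov(E[1_{k1}^{(n)} | 𝒴_n], E[1_{k2}^{(n)} | 𝒴_n])`. -/
noncomputable def cCov (n k1 k2 : ℝ) : ℝ :=
  -8 * (n + 1) * (3 * n - k2 + 2) * (n - k2 - 1) /
    (n * (n - 1) ^ 2 * (k1 + 1) * (k1 + 2) * (k2 + 1) * (k2 + 2) * (k2 + 3) * (k2 + 4))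

/-!
The covariance `cCov n k1 k2` factors into a function of `k1` times a function of `k2`, and
both factors are discrete derivatives:
`1 / ((k+1)(k+2)) = 1/(k+1) - 1/(k+2)` and
`(3n-k+2)(n-k-1) / ((k+1)(k+2)(k+3)(k+4)) = T k - T (k+1)` with
`T k = (n-k)(n-k-1) / ((k+1)(k+2)(k+3))`.
The double sum therefore telescopes to `(1/(i1+1) - 1/(i2+1)) * T i2` (as `T n = 0`), and
what remains is an identity of rational functions.
-/

open Finset

lemma Finset.sum_Icc_sub_succ {G : Type*} [AddCommGroup G] (f : ℕ → G) {m n : ℕ}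
    (h : m ≤ n) : ∑ i ∈ Icc m n, (f i - f (i + 1)) = f m - f (n + 1) := by
  rw [← neg_sub (f (n + 1)), ← sum_Icc_sub h f, ← sum_neg_distrib]
  simp only [neg_sub]

lemma sum_Icc_one_div_add_one_mul_add_two {a m : ℕ} (h : a ≤ m) :
    ∑ k ∈ Icc a m, 1 / (((k : ℝ) + 1) * ((k : ℝ) + 2)) =
      1 / ((a : ℝ) + 1) - 1 / ((m : ℝ) + 2) := by
  have partial_fractions : ∀ k : ℕ, 1 / (((k : ℝ) + 1) * ((k : ℝ) + 2)) =
      1 / ((k : ℝ) + 1) - 1 / (((k + 1 : ℕ) : ℝ) + 1) := by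
    intro k
    push_cast
    field_simp
    ring
  rw [sum_congr rfl fun k _ => partial_fractions k,
    sum_Icc_sub_succ (fun k : ℕ => 1 / ((k : ℝ) + 1)) h]
  push_cast
  ring

noncomputable def cCovTail (n : ℝ) (k : ℕ) : ℝ :=
  (n - k) * (n - k - 1) / (((k : ℝ) + 1) * ((k : ℝ) + 2) * ((k : ℝ) + 3))

lemma cCovTail_self (n : ℕ) : cCovTail n n = 0 := by
  simp [cCovTail]

lemma cCovTail_sub_cCovTail_succ (n : ℝ) (k : ℕ) :
    cCovTail n k - cCovTail n (k + 1) =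
      (3 * n - k + 2) * (n - k - 1) /
        (((k : ℝ) + 1) * ((k : ℝ) + 2) * ((k : ℝ) + 3) * ((k : ℝ) + 4)) := by
  unfold cCovTail
  push_cast
  field_simp
  ring

lemma cCov_eq_mul (n : ℝ) (k1 k2 : ℕ) :
    cCov n k1 k2 = -8 * (n + 1) / (n * (n - 1) ^ 2) *
      (1 / (((k1 : ℝ) + 1) * ((k1 : ℝ) + 2))) * (cCovTail n k2 - cCovTail n (k2 + 1)) := by
  rw [cCovTail_sub_cCovTail_succ, cCov]
  field_simp

lemma sum_Icc_sum_Icc_cCov {n i1 i2 : ℕ} (h12 : i1 < i2) (h2n : i2 < n) :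
    ∑ k1 ∈ Icc i1 (i2 - 1), ∑ k2 ∈ Icc i2 (n - 1), cCov n k1 k2 =
      -8 * ((n : ℝ) + 1) / (n * ((n : ℝ) - 1) ^ 2) *
        (1 / ((i1 : ℝ) + 1) - 1 / ((i2 : ℝ) + 1)) * cCovTail n i2 := by
  simp only [cCov_eq_mul, ← mul_sum, ← sum_mul]
  rw [sum_Icc_one_div_add_one_mul_add_two (by omega), sum_Icc_sub_succ _ (by omega),
    Nat.sub_add_cancel (by omega : 1 ≤ n), cCovTail_self, Nat.cast_pred (by omega)]
  ring

theorem stmt7_general (n i1 i2 : ℕ) (hi1 : 1 ≤ i1) (hi12 : i1 < i2) (hi2 : i2 ≤ n - 1) :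
    (1 / ((i1 : ℝ) * (i2 : ℝ))) *
      ((i2 : ℝ) ^ 2 * wVar n i2 +
        ∑ k1 ∈ Finset.Icc i1 (i2 - 1), ∑ k2 ∈ Finset.Icc i2 (n - 1), cCov n k1 k2) =
    4 * ((n : ℝ) + 1) * ((i1 : ℝ) - 1) * ((n : ℝ) - i2) * ((n : ℝ) - i2 - 1) /
      ((n : ℝ) * ((n : ℝ) - 1) ^ 2 * (i1 : ℝ) * ((i1 : ℝ) + 1) * (i2 : ℝ) *
        ((i2 : ℝ) + 1) * ((i2 : ℝ) + 2) * ((i2 : ℝ) + 3)) := by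
  have hn : (3 : ℝ) ≤ n := by exact_mod_cast (by omega : 3 ≤ n)
  have hi1R : (1 : ℝ) ≤ i1 := by exact_mod_cast hi1
  have hi12R : (i1 : ℝ) < i2 := by exact_mod_cast hi12
  have hn1 : (n : ℝ) - 1 ≠ 0 := by linarith
  have hi1_ne : (i1 : ℝ) ≠ 0 := by linarith
  have hi2_ne : (i2 : ℝ) ≠ 0 := by linarith
  rw [sum_Icc_sum_Icc_cCov hi12 (by omega), wVar, cCovTail]
  field_simp
  ring

/-- Closed form for the covariance `Cov(V_{i1}^{(n)}, V_{i2}^{(n)})` of the topological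
weights of a Yule tree with `n` tips. -/
theorem stmt7 (n i1 i2 : ℕ) (hn : 4 ≤ n) (hi1 : 1 ≤ i1) (hi12 : i1 < i2) (hi2 : i2 ≤ n - 1) :
    (1 / ((i1 : ℝ) * (i2 : ℝ))) *
      ((i2 : ℝ) ^ 2 * wVar n i2 +
        ∑ k1 ∈ Finset.Icc i1 (i2 - 1), ∑ k2 ∈ Finset.Icc i2 (n - 1), cCov n k1 k2) =
    4 * ((n : ℝ) + 1) * ((i1 : ℝ) - 1) * ((n : ℝ) - i2) * ((n : ℝ) - i2 - 1) /
      ((n : ℝ) * ((n : ℝ) - 1) ^ 2 * (i1 : ℝ) * ((i1 : ℝ) + 1) * (i2 : ℝ) *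
        ((i2 : ℝ) + 1) * ((i2 : ℝ) + 2) * ((i2 : ℝ) + 3)) :=
  stmt7_general n i1 i2 hi1 hi12 hi2
end

section
/- Define w(n,i) := 4(n+1)(n−i)(n−i−1)(i−1)/(n(n−1)²·i²(i+1)²(i+2)(i+3)) and u(n,i1,i2) := 4(n+1)(i1−1)(n−i2)(n−i2−1)/(n(n−1)²·i1(i1+1)·i2(i2+1)(i2+2)(i2+3)). Then the sequence r_n := 2·∑_{i=1}^{n−1} w(n,i) + 2·∑_{1 ≤ i1 < i2 ≤ n−1} u(n,i1,i2), defined for integers n ≥ 2, converges as n → ∞ to 11 − 10π²/9. -/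
/-!
The covariance `u(n, i1, i2)` factors as a function of `i1` times the rational function
`(n - m)(n - m - 1) / (m (m + 1) (m + 2) (m + 3))` of `m = i2`, which has an explicit rational
antidifference in `m`; so the inner sum telescopes. Decomposing the remaining summand into partial
fractions in `i` gives `1/i`, `1/i²` and telescoping differences, whence the closed form
`3 n² (n - 1)² r_n = -8 n H_{n-1} - 4 n² (n + 1) (5 n + 7) H⁽²⁾_{n-1} + (n - 1)(33 n³ + 91 n² + 84 n + 36)`.
As `H_{n-1} ≤ n` and `H⁽²⁾_{n-1} → π²/6`, dividing by `n⁴` gives `r_n → (33 - 20 π²/6) / 3`.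
-/

open Filter

/-- `u(n,i1,i2) = Cov(V_{i1}^{(n)}, V_{i2}^{(n)})`. -/
noncomputable def uCov (n i1 i2 : ℝ) : ℝ :=
  4 * (n + 1) * (i1 - 1) * (n - i2) * (n - i2 - 1) /
    (n * (n - 1) ^ 2 * i1 * (i1 + 1) * i2 * (i2 + 1) * (i2 + 2) * (i2 + 3))

open Finset Topology

noncomputable def uCovLeft (n i : ℝ) : ℝ := 4 * (n + 1) * (i - 1) / (n * (n - 1) ^ 2 * i * (i + 1))

noncomputable def uCovRight (n m : ℝ) : ℝ := (n - m) * (n - m - 1) / (m * (m + 1) * (m + 2) * (m + 3))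

noncomputable def uCovRightAntidiff (n m : ℝ) : ℝ :=
  -(n * (n - 1)) / (6 * m) + n * (n + 2) / (3 * (m + 1)) - (n + 2) * (n + 3) / (6 * (m + 2))

lemma uCov_eq_mul (n i1 i2 : ℝ) : uCov n i1 i2 = uCovLeft n i1 * uCovRight n i2 := by
  rw [uCovLeft, uCovRight, div_mul_div_comm, uCov]
  ring

lemma uCovRight_eq_sub (n : ℝ) {m : ℝ} (hm : 0 < m) :
    uCovRight n m = uCovRightAntidiff n (m + 1) - uCovRightAntidiff n m := by
  unfold uCovRight uCovRightAntidiff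
  field_simp
  ring

lemma uCovRightAntidiff_self {n : ℝ} (hn : 0 < n) : uCovRightAntidiff n n = -1 / (3 * (n + 1)) := by
  unfold uCovRightAntidiff
  field_simp
  ring

lemma sum_uCov_Icc (n : ℝ) {i M : ℕ} (hiM : i ≤ M) :
    ∑ m ∈ Icc (i + 1) M, uCov n i m =
      uCovLeft n i * (uCovRightAntidiff n (M + 1) - uCovRightAntidiff n (i + 1)) := by
  simp only [uCov_eq_mul, ← mul_sum, ← Ico_add_one_right_eq_Icc]
  congr 1
  calc ∑ m ∈ Ico (i + 1) (M + 1), uCovRight n m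
      = ∑ m ∈ Ico (i + 1) (M + 1),
          (uCovRightAntidiff n ((m + 1 : ℕ) : ℝ) - uCovRightAntidiff n (m : ℕ)) := by
        refine sum_congr rfl fun m hm => ?_
        push_cast
        exact uCovRight_eq_sub n (Nat.cast_pos.2 (by grind))
    _ = _ := by rw [sum_Ico_sub (fun m : ℕ => uCovRightAntidiff n m) (by omega)]; push_cast; rfl

noncomputable def discrepancyTerm (n i : ℝ) : ℝ :=
  2 * wVar n i + 2 * uCovLeft n i * (-1 / (3 * (n + 1)) - uCovRightAntidiff n (i + 1))

lemma sum_discrepancyTerm_Icc {n : ℝ} (hn : 1 < n) (M : ℕ) :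
    3 * n * (n - 1) ^ 2 * ∑ i ∈ Icc 1 M, discrepancyTerm n i =
      -8 * ∑ k ∈ Icc 1 M, 1 / (k : ℝ) - 4 * n * (n + 1) * (5 * n + 7) * ∑ k ∈ Icc 1 M, 1 / (k : ℝ) ^ 2
        + (-8 * n ^ 3 + 24 * n ^ 2 + 80 * n + 32) * (1 / (M + 1) - 1)
        - 16 * n * (n + 1) * (n + 2) * (1 / (M + 1) ^ 2 - 1)
        - 6 * (n + 1) * (n + 2) * (n + 3) * (1 / (M + 1) + 1 / (M + 2) - 3 / 2) := by
  induction M with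
  | zero => norm_num
  | succ M ih =>
    have hn1 : n - 1 ≠ 0 := sub_ne_zero.2 hn.ne'
    simp only [sum_Icc_succ_top (Nat.le_add_left 1 M), mul_add, ih]
    unfold discrepancyTerm wVar uCovLeft uCovRightAntidiff
    push_cast
    field_simp
    ring

noncomputable def discrepancyVariance (n : ℕ) : ℝ :=
  2 * (∑ i ∈ Icc 1 (n - 1), wVar n i) +
    2 * ∑ i1 ∈ Icc 1 (n - 1), ∑ i2 ∈ Icc (i1 + 1) (n - 1), uCov n i1 i2

lemma discrepancyVariance_eq_sum {n : ℕ} (hn : 0 < n) :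
    discrepancyVariance n = ∑ i ∈ Icc 1 (n - 1), discrepancyTerm n i := by
  have hcast : ((n - 1 : ℕ) : ℝ) + 1 = n := by rw [Nat.cast_sub hn, Nat.cast_one, sub_add_cancel]
  have hinner : ∀ i ∈ Icc 1 (n - 1), ∑ m ∈ Icc (i + 1) (n - 1), uCov n i m =
      uCovLeft n i * (-1 / (3 * (n + 1)) - uCovRightAntidiff n (i + 1)) := fun i hi => by
    rw [sum_uCov_Icc n (mem_Icc.1 hi).2, hcast, uCovRightAntidiff_self (by positivity)]
  rw [discrepancyVariance, sum_congr rfl hinner, mul_sum, mul_sum, ← sum_add_distrib]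
  refine sum_congr rfl fun i _ => ?_
  rw [discrepancyTerm]
  ring

lemma discrepancyVariance_eq {n : ℕ} (hn : 2 ≤ n) :
    discrepancyVariance n =
      (-8 * (n : ℝ)⁻¹ ^ 3 * ∑ k ∈ Icc 1 (n - 1), 1 / (k : ℝ)
        - 4 * (1 + (n : ℝ)⁻¹) * (5 + 7 * (n : ℝ)⁻¹) * ∑ k ∈ Icc 1 (n - 1), 1 / (k : ℝ) ^ 2
        + (1 - (n : ℝ)⁻¹) * (33 + 91 * (n : ℝ)⁻¹ + 84 * (n : ℝ)⁻¹ ^ 2 + 36 * (n : ℝ)⁻¹ ^ 3))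
        / (3 * (1 - (n : ℝ)⁻¹) ^ 2) := by
  have hn' : (1 : ℝ) < n := by exact_mod_cast hn
  have hcast : ((n - 1 : ℕ) : ℝ) = n - 1 := by rw [Nat.cast_sub (by omega), Nat.cast_one]
  have hsum := sum_discrepancyTerm_Icc hn' (n - 1)
  rw [hcast, sub_add_cancel, show (n : ℝ) - 1 + 2 = n + 1 by ring] at hsum
  rw [discrepancyVariance_eq_sum (by omega),
    eq_div_of_mul_eq (by positivity) ((mul_comm _ _).trans hsum)]
  field_simp
  ring

lemma sum_Icc_one_div_le (N : ℕ) : ∑ k ∈ Icc 1 N, 1 / (k : ℝ) ≤ N := by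
  simpa using sum_le_card_nsmul (Icc 1 N) (fun k : ℕ => 1 / (k : ℝ)) 1 fun k hk => by
    simpa using inv_le_one_of_one_le₀ (Nat.one_le_cast.2 (mem_Icc.1 hk).1)

lemma tendsto_inv_pow_three_mul_sum_Icc_one_div :
    Tendsto (fun n : ℕ => (n : ℝ)⁻¹ ^ 3 * ∑ k ∈ Icc 1 (n - 1), 1 / (k : ℝ)) atTop (𝓝 0) := by
  have hx : Tendsto (fun n : ℕ => (n : ℝ)⁻¹ ^ 2) atTop (𝓝 0) := by
    simpa using (tendsto_inv_atTop_nhds_zero_nat (𝕜 := ℝ)).pow 2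
  refine squeeze_zero (fun n => by positivity) (fun n => ?_) hx
  calc (n : ℝ)⁻¹ ^ 3 * ∑ k ∈ Icc 1 (n - 1), 1 / (k : ℝ) ≤ (n : ℝ)⁻¹ ^ 3 * n := by
        gcongr
        exact (sum_Icc_one_div_le _).trans (by exact_mod_cast Nat.sub_le n 1)
    _ = (n : ℝ)⁻¹ ^ 2 := by
        rcases eq_or_ne (n : ℝ) 0 with hn | hn
        · simp [hn]
        · field_simp

lemma tendsto_sum_Icc_one_div_sq :
    Tendsto (fun n : ℕ => ∑ k ∈ Icc 1 (n - 1), 1 / (k : ℝ) ^ 2) atTop (𝓝 (Real.pi ^ 2 / 6)) := by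
  -- the `k = 0` term of the zeta series is `1 / 0 = 0`
  refine hasSum_zeta_two.tendsto_sum_nat.congr fun n => ?_
  cases n with
  | zero => simp
  | succ m => simp [sum_range_eq_add_Ico _ m.succ_pos, ← Ico_add_one_right_eq_Icc]

/-- `Var(∑ (V_i^{(n)} − E[V_i^{(n)}]) Z_i) → 11 − 10π²/9` as `n → ∞`. -/
theorem stmt11 :
    Tendsto (fun n : ℕ =>
        2 * (∑ i ∈ Finset.Icc 1 (n - 1), wVar n i) +
          2 * ∑ i1 ∈ Finset.Icc 1 (n - 1), ∑ i2 ∈ Finset.Icc (i1 + 1) (n - 1), uCov n i1 i2)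
      atTop (nhds (11 - 10 * Real.pi ^ 2 / 9)) := by
  have hx : Tendsto (fun n : ℕ => (n : ℝ)⁻¹) atTop (𝓝 0) := tendsto_inv_atTop_nhds_zero_nat
  have hγ : Tendsto (fun n : ℕ => -4 * (1 + (n : ℝ)⁻¹) * (5 + 7 * (n : ℝ)⁻¹)) atTop (𝓝 (-20)) := by
    convert ((hx.const_add 1).const_mul (-4)).mul ((hx.const_mul 7).const_add 5) using 2
    norm_num
  have hρ : Tendsto (fun n : ℕ => (1 - (n : ℝ)⁻¹) *
      (33 + 91 * (n : ℝ)⁻¹ + 84 * (n : ℝ)⁻¹ ^ 2 + 36 * (n : ℝ)⁻¹ ^ 3)) atTop (𝓝 33) := by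
    simpa using (hx.const_sub 1).mul ((((hx.const_mul 91).const_add 33).add
      ((hx.pow 2).const_mul 84)).add ((hx.pow 3).const_mul 36))
  have hden : Tendsto (fun n : ℕ => 3 * (1 - (n : ℝ)⁻¹) ^ 2) atTop (𝓝 3) := by
    simpa using ((hx.const_sub 1).pow 2).const_mul 3
  have hlim := ((((tendsto_inv_pow_three_mul_sum_Icc_one_div.const_mul (-8)).add
    (hγ.mul tendsto_sum_Icc_one_div_sq)).add hρ).div hden three_ne_zero)
  rw [show (-8 * 0 + -20 * (Real.pi ^ 2 / 6) + 33) / 3 = 11 - 10 * Real.pi ^ 2 / 9 by ring] at hlim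
  refine hlim.congr' ?_
  filter_upwards [eventually_ge_atTop 2] with n hn
  rw [Pi.div_apply, ← discrepancyVariance, discrepancyVariance_eq hn]
  ring
end
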